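/- Let P = conv{x ∈ ℝ^4 : x_i ∈ {0,1} for all i, and x_1 + x_2 + x_3 + x_4 = 2} (a double covering polytope with six vertices). Then for every k ∈ ℕ and every simple graph G on Fin k, there is no injective affine map φ : ℝ^4 → ℝ^k such that φ(P) equals conv(SSP(G)) or equals an exposed face of conv(SSP(G)). -/

import Mathlib

/-- The vertex set of the stable set polytope of a simple graph `G` on `Fin k`. -/
def SSP {k : ℕ} (G : SimpleGraph (Fin k)) : Set (Fin k → ℝ) :=
  {y | (∀ i, y i = 0 ∨ y i = 1) ∧ ∀ i j, G.Adj i j → y i + y j ≤ 1}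

/-- The vertex set of the double covering polytope
`P = conv{x ∈ {0,1}^4 : x₁ + x₂ + x₃ + x₄ = 2}`. -/
def DCP6 : Set (Fin 4 → ℝ) :=
  {x | (∀ i, x i = 0 ∨ x i = 1) ∧ x 0 + x 1 + x 2 + x 3 = 2}

/-!
Let `φ` map the octahedron `conv DCP6` onto a face `F` of `STAB(G) = conv (SSP G)`. Both polytopes
have 0/1 vertices, so `φ` maps the six vertices of the octahedron onto `F ∩ SSP G`. The octahedron
consists of three antipodal pairs `a + a' = b + b' = c + c'`, and for two adjacent vertices `a, b`
the point `a + b` splits in only one way as a sum of two vertices of `F`, hence (as `F` is a face)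
of `STAB(G)`.

On the coordinates where `A = φ a` and `A' = φ a'` differ, the three stable sets `A, B, C` are
proper two-colourings of every edge. Hence swapping `A` and `B` on the coordinates where `A`
agrees with `C` produces two stable sets `S, T` with `S + T = A + B`, and unique splitting forces
the coordinates where `A` and `B` differ to lie all inside, or all outside, the set where `A`
agrees with `C`. This dichotomy for the three pairs `(A, B)`, `(A, C)`, `(B, C)` is contradictory.
-/

open Set

theorem eq_of_add_eq_add_of_binary {a a' b b' : ℝ} (ha : a = 0 ∨ a = 1) (ha' : a' = 0 ∨ a' = 1)
    (hb : b = 0 ∨ b = 1) (hb' : b' = 0 ∨ b' = 1) (h : a + a' = b + b') (hne : a + a' ≠ 1) :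
    a = b := by
  rcases ha with rfl | rfl <;> rcases ha' with rfl | rfl <;> rcases hb with rfl | rfl <;>
    rcases hb' with rfl | rfl <;> norm_num at *

theorem eq_of_ne_of_ne_of_binary {a b c : ℝ} (ha : a = 0 ∨ a = 1) (hb : b = 0 ∨ b = 1)
    (hc : c = 0 ∨ c = 1) (hab : a ≠ b) (hac : a ≠ c) : b = c := by
  rcases ha with rfl | rfl <;> rcases hb with rfl | rfl <;> rcases hc with rfl | rfl <;>
    norm_num at *

theorem extremePoints_convexHull_of_binary {ι : Type*} {s : Set (ι → ℝ)}
    (hs : ∀ x ∈ s, ∀ i, x i = 0 ∨ x i = 1) :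
    extremePoints ℝ (convexHull ℝ s) = s := by
  refine (extremePoints_convexHull_subset).antisymm fun x hx => ?_
  have hcube : convexHull ℝ s ⊆ univ.pi fun _ => Icc (0 : ℝ) 1 :=
    convexHull_min (fun y hy i _ => by rcases hs y hy i with h | h <;> simp [h])
      (convex_pi fun _ _ => convex_Icc 0 1)
  refine inter_extremePoints_subset_extremePoints_of_subset hcube ⟨subset_convexHull ℝ s hx, ?_⟩
  rw [extremePoints_pi]
  intro i _
  rw [extremePoints_Icc zero_le_one]
  rcases hs x hx i with h | h <;> simp [h]

theorem AffineMap.image_extremePoints_of_injective {E F : Type*} [AddCommGroup E] [Module ℝ E]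
    [AddCommGroup F] [Module ℝ F] {φ : E →ᵃ[ℝ] F} (hφ : Function.Injective φ) (s : Set E) :
    φ '' extremePoints ℝ s = extremePoints ℝ (φ '' s) := by
  ext y
  constructor
  · rintro ⟨x, ⟨hx, hext⟩, rfl⟩
    refine ⟨mem_image_of_mem φ hx, ?_⟩
    rintro _ ⟨x₁, h₁, rfl⟩ _ ⟨x₂, h₂, rfl⟩ hseg
    rw [← image_openSegment] at hseg
    obtain ⟨z, hz, hzx⟩ := hseg
    rw [hφ hzx] at hz
    rw [hext h₁ h₂ hz]
  · rintro ⟨⟨x, hx, rfl⟩, hext⟩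
    refine ⟨x, ⟨hx, fun x₁ h₁ x₂ h₂ hseg => hφ ?_⟩, rfl⟩
    exact hext (mem_image_of_mem φ h₁) (mem_image_of_mem φ h₂)
      (image_openSegment ℝ φ x₁ x₂ ▸ mem_image_of_mem φ hseg)

theorem AffineMap.add_eq_add_iff_of_injective {E F : Type*} [AddCommGroup E] [Module ℝ E]
    [AddCommGroup F] [Module ℝ F] {φ : E →ᵃ[ℝ] F} (hφ : Function.Injective φ) {a b c d : E} :
    φ a + φ b = φ c + φ d ↔ a + b = c + d := by
  rw [← sub_eq_sub_iff_add_eq_add, ← sub_eq_sub_iff_add_eq_add, ← vsub_eq_sub, ← vsub_eq_sub,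
    ← AffineMap.linearMap_vsub, ← AffineMap.linearMap_vsub,
    (φ.linear_injective_iff.mpr hφ).eq_iff, vsub_eq_sub, vsub_eq_sub]

theorem IsExtreme.mem_of_add_eq_add {E : Type*} [AddCommGroup E] [Module ℝ E] {A B : Set E}
    (hAB : IsExtreme ℝ A B) (hB : Convex ℝ B) {u u' v w : E} (hu : u ∈ A) (hu' : u' ∈ A)
    (hv : v ∈ B) (hw : w ∈ B) (h : u + u' = v + w) : u ∈ B ∧ u' ∈ B := by
  have hmid : (1 / 2 : ℝ) • u + (1 / 2 : ℝ) • u' ∈ B := by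
    rw [← smul_add, h, smul_add]
    exact hB hv hw (by norm_num) (by norm_num) (by norm_num)
  have hseg : (1 / 2 : ℝ) • u + (1 / 2 : ℝ) • u' ∈ openSegment ℝ u u' :=
    ⟨1 / 2, 1 / 2, by norm_num, by norm_num, by norm_num, rfl⟩
  exact ⟨hAB.left_mem_of_mem_openSegment hu hu' hmid hseg,
    hAB.right_mem_of_mem_openSegment hu hu' hmid hseg⟩

theorem image_eq_inter_of_isExtreme {ι κ : Type*} {s : Set (ι → ℝ)} {t : Set (κ → ℝ)}
    (hs : ∀ x ∈ s, ∀ i, x i = 0 ∨ x i = 1) (ht : ∀ y ∈ t, ∀ i, y i = 0 ∨ y i = 1)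
    {φ : (ι → ℝ) →ᵃ[ℝ] (κ → ℝ)} (hφ : Function.Injective φ)
    (hF : IsExtreme ℝ (convexHull ℝ t) (φ '' convexHull ℝ s)) :
    φ '' s = φ '' convexHull ℝ s ∩ t :=
  calc φ '' s = φ '' extremePoints ℝ (convexHull ℝ s) := by
        rw [extremePoints_convexHull_of_binary hs]
    _ = extremePoints ℝ (φ '' convexHull ℝ s) := φ.image_extremePoints_of_injective hφ _
    _ = φ '' convexHull ℝ s ∩ extremePoints ℝ (convexHull ℝ t) := hF.extremePoints_eq
    _ = φ '' convexHull ℝ s ∩ t := by rw [extremePoints_convexHull_of_binary ht]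

def weightTwo (ι : Type*) [Fintype ι] : Set (ι → ℝ) :=
  {x | (∀ i, x i = 0 ∨ x i = 1) ∧ ∑ i, x i = 2}

theorem DCP6_eq_weightTwo : DCP6 = weightTwo (Fin 4) := by
  ext x
  simp [DCP6, weightTwo, Fin.sum_univ_four]

namespace weightTwo

variable {ι : Type*} [Fintype ι] {x y : ι → ℝ}

theorem nonneg (hx : x ∈ weightTwo ι) (i : ι) : 0 ≤ x i := by
  rcases hx.1 i with h | h <;> simp [h]

theorem le_one (hx : x ∈ weightTwo ι) (i : ι) : x i ≤ 1 := by
  rcases hx.1 i with h | h <;> simp [h]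

theorem eq_zero_of_eq_one [DecidableEq ι] (hx : x ∈ weightTwo ι) {i m j : ι} (hi : x i = 1)
    (hm : x m = 1) (him : i ≠ m) (hji : j ≠ i) (hjm : j ≠ m) : x j = 0 := by
  have hle : x i + x m + x j ≤ ∑ l, x l :=
    calc x i + x m + x j = ∑ l ∈ {i, m, j}, x l := by
          rw [Finset.sum_insert (by simp [him, hji.symm]), Finset.sum_pair (Ne.symm hjm),
            add_assoc]
      _ ≤ ∑ l, x l := Finset.sum_le_sum_of_subset_of_nonneg (Finset.subset_univ _)
          fun l _ _ => nonneg hx l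
  linarith [hx.2, nonneg hx j]

theorem eq_of_eq_one (hx : x ∈ weightTwo ι) (hy : y ∈ weightTwo ι) {i m : ι} (him : i ≠ m)
    (hxi : x i = 1) (hyi : y i = 1) (hxm : x m = 1) (hym : y m = 1) : x = y := by
  classical
  funext j
  by_cases hji : j = i
  · rw [hji, hxi, hyi]
  by_cases hjm : j = m
  · rw [hjm, hxm, hym]
  rw [eq_zero_of_eq_one hx hxi hxm him hji hjm, eq_zero_of_eq_one hy hyi hym him hji hjm]

theorem exists_ne_eq_one (hx : x ∈ weightTwo ι) {i : ι} (hi : x i = 1) : ∃ m ≠ i, x m = 1 := by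
  by_contra! h
  have hsum : ∑ l, x l = x i :=
    Finset.sum_eq_single i (fun l _ hli => (hx.1 l).resolve_right (h l hli)) (by simp)
  linarith [hx.2]

theorem eq_or_eq_of_add_eq_add {a b c d : ι → ℝ} (ha : a ∈ weightTwo ι) (hb : b ∈ weightTwo ι)
    (hc : c ∈ weightTwo ι) (hd : d ∈ weightTwo ι) (h : c + d = a + b) {i : ι} (hai : a i = 1)
    (hbi : b i = 1) : c = a ∨ c = b := by
  have hsum : ∀ l, c l + d l = a l + b l := fun l => congrFun h l
  have hci : c i = 1 := by linarith [hsum i, le_one hc i, le_one hd i]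
  obtain ⟨m, hmi, hcm⟩ := exists_ne_eq_one hc hci
  have hab : a m = 1 ∨ b m = 1 := by
    rcases ha.1 m with ham | ham
    · rcases hb.1 m with hbm | hbm
      · linarith [hsum m, nonneg hd m]
      · exact Or.inr hbm
    · exact Or.inl ham
  rcases hab with ham | hbm
  · exact Or.inl (eq_of_eq_one hc ha hmi.symm hci hai hcm ham)
  · exact Or.inr (eq_of_eq_one hc hb hmi.symm hci hbi hcm hbm)

end weightTwo

section StableSets

variable {k : ℕ} {G : SimpleGraph (Fin k)} {A A' B B' C C' : Fin k → ℝ}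

def SplitsUniquely (G : SimpleGraph (Fin k)) (A B : Fin k → ℝ) : Prop :=
  ∀ S ∈ SSP G, ∀ T ∈ SSP G, S + T = A + B → S = A ∨ S = B

theorem piecewise_mem_SSP (hA : A ∈ SSP G) (hB : B ∈ SSP G) {P : Set (Fin k)}
    [DecidablePred (· ∈ P)] (hP : ∀ m n, G.Adj m n → m ∈ P → n ∉ P → A m = B m ∨ A n = B n) :
    P.piecewise A B ∈ SSP G := by
  refine ⟨fun m => ?_, fun m n hadj => ?_⟩
  · by_cases hm : m ∈ P
    · simpa [hm] using hA.1 m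
    · simpa [hm] using hB.1 m
  by_cases hm : m ∈ P <;> by_cases hn : n ∈ P <;> simp only [hm, hn, piecewise_eq_of_mem,
    piecewise_eq_of_notMem, not_false_eq_true]
  · exact hA.2 m n hadj
  · rcases hP m n hadj hm hn with h | h
    · rw [h]; exact hB.2 m n hadj
    · rw [← h]; exact hA.2 m n hadj
  · rcases hP n m hadj.symm hn hm with h | h
    · rw [h]; exact hB.2 m n hadj
    · rw [← h]; exact hA.2 m n hadj
  · exact hB.2 m n hadj

theorem add_eq_one_of_adj {X X' : Fin k → ℝ} (hX : X ∈ SSP G) (hX' : X' ∈ SSP G) {m n : Fin k}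
    (hadj : G.Adj m n) (hm : X m + X' m = 1) (hn : X n + X' n = 1) : X m + X n = 1 := by
  have h1 := hX.2 m n hadj
  have h2 := hX'.2 m n hadj
  linarith

theorem agree_or_agree_of_splitsUniquely (hA : A ∈ SSP G) (hA' : A' ∈ SSP G)
    (hB : B ∈ SSP G) (hB' : B' ∈ SSP G) (hC : C ∈ SSP G) (hC' : C' ∈ SSP G)
    (hAB : A + A' = B + B') (hAC : A + A' = C + C') (hsplit : SplitsUniquely G A B) :
    (∀ m, A m = C m → A m = B m) ∨ (∀ m, A m ≠ C m → A m = B m) := by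
  classical
  set P : Set (Fin k) := {m | A m = C m}
  have hcomplement : ∀ m, A m ≠ B m → A m + A' m = 1 := fun m hm => by
    by_contra h
    exact hm (eq_of_add_eq_add_of_binary (hA.1 m) (hA'.1 m) (hB.1 m) (hB'.1 m) (congrFun hAB m) h)
  have hP : ∀ m n, G.Adj m n → m ∈ P → n ∉ P → A m = B m ∨ A n = B n := by
    intro m n hadj (hm : A m = C m) hn
    by_contra! hne
    have hCm : C m + C' m = 1 := by rw [← Pi.add_apply, ← hAC]; exact hcomplement m hne.1
    have hCn : C n + C' n = 1 := by rw [← Pi.add_apply, ← hAC]; exact hcomplement n hne.2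
    have hAmn := add_eq_one_of_adj hA hA' hadj (hcomplement m hne.1) (hcomplement n hne.2)
    have hCmn := add_eq_one_of_adj hC hC' hadj hCm hCn
    exact hn (show A n = C n by linarith)
  have hS := piecewise_mem_SSP hB hA fun m n hadj hm hn => (hP m n hadj hm hn).imp Eq.symm Eq.symm
  have hT := piecewise_mem_SSP hA hB hP
  have hsum : P.piecewise B A + P.piecewise A B = A + B := by
    ext m
    by_cases hm : m ∈ P <;> simp [hm, add_comm]
  rcases hsplit _ hS _ hT hsum with h | h
  · left
    intro m hm
    simpa [P, hm] using (congrFun h m).symm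
  · right
    intro m hm
    simpa [P, hm] using congrFun h m

theorem false_of_agree_or_agree (hA : ∀ m, A m = 0 ∨ A m = 1) (hB : ∀ m, B m = 0 ∨ B m = 1)
    (hC : ∀ m, C m = 0 ∨ C m = 1) (hAB : A ≠ B) (hAC : A ≠ C) (hBC : B ≠ C)
    (h₁ : (∀ m, A m = C m → A m = B m) ∨ (∀ m, A m ≠ C m → A m = B m))
    (h₂ : (∀ m, A m = B m → A m = C m) ∨ (∀ m, A m ≠ B m → A m = C m))
    (h₃ : (∀ m, B m = A m → B m = C m) ∨ (∀ m, B m ≠ A m → B m = C m)) : False := by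
  obtain ⟨i, hi⟩ := Function.ne_iff.mp hAB
  obtain ⟨j, hj⟩ := Function.ne_iff.mp hAC
  rcases h₁ with h₁ | h₁ <;> rcases h₂ with h₂ | h₂
  · refine hBC (funext fun m => ?_)
    by_cases hm : A m = B m
    · rw [← hm, h₂ m hm]
    · have hm' : A m ≠ C m := fun h => hm (h₁ m h)
      exact eq_of_ne_of_ne_of_binary (hA m) (hB m) (hC m) hm hm'
  · exact hi (h₁ i (h₂ i hi))
  · exact hj (h₂ j (h₁ j hj))
  · rcases h₃ with h₃ | h₃
    · exact hj ((h₁ j hj).trans (h₃ j (h₁ j hj).symm))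
    · exact hi ((h₂ i hi).trans (h₃ i (Ne.symm hi)).symm)

theorem false_of_splitsUniquely_octahedron (hA : A ∈ SSP G) (hA' : A' ∈ SSP G)
    (hB : B ∈ SSP G) (hB' : B' ∈ SSP G) (hC : C ∈ SSP G) (hC' : C' ∈ SSP G)
    (hAB : A + A' = B + B') (hAC : A + A' = C + C') (hAB_ne : A ≠ B) (hAC_ne : A ≠ C)
    (hBC_ne : B ≠ C) (hsAB : SplitsUniquely G A B) (hsAC : SplitsUniquely G A C)
    (hsBC : SplitsUniquely G B C) : False :=
  false_of_agree_or_agree hA.1 hB.1 hC.1 hAB_ne hAC_ne hBC_ne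
    (agree_or_agree_of_splitsUniquely hA hA' hB hB' hC hC' hAB hAC hsAB)
    (agree_or_agree_of_splitsUniquely hA hA' hC hC' hB hB' hAC hAB hsAC)
    (agree_or_agree_of_splitsUniquely hB hB' hC hC' hA hA' (hAB.symm.trans hAC) hAB.symm hsBC)

end StableSets

theorem splitsUniquely_of_isExtreme {k : ℕ} {G : SimpleGraph (Fin k)}
    {φ : (Fin 4 → ℝ) →ᵃ[ℝ] (Fin k → ℝ)} (hφ : Function.Injective φ)
    (hF : IsExtreme ℝ (convexHull ℝ (SSP G)) (φ '' convexHull ℝ DCP6)) {a b : Fin 4 → ℝ}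
    (ha : a ∈ DCP6) (hb : b ∈ DCP6) {i : Fin 4} (hai : a i = 1) (hbi : b i = 1) :
    SplitsUniquely G (φ a) (φ b) := by
  intro S hS T hT hST
  have hV := image_eq_inter_of_isExtreme (fun x hx => hx.1) (fun y hy => hy.1) hφ hF
  obtain ⟨hSF, hTF⟩ := hF.mem_of_add_eq_add ((convex_convexHull ℝ _).affine_image φ)
    (subset_convexHull ℝ _ hS) (subset_convexHull ℝ _ hT)
    (mem_image_of_mem φ (subset_convexHull ℝ _ ha)) (mem_image_of_mem φ (subset_convexHull ℝ _ hb))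
    hST
  obtain ⟨c, hc, rfl⟩ : S ∈ φ '' DCP6 := hV ▸ ⟨hSF, hS⟩
  obtain ⟨d, hd, rfl⟩ : T ∈ φ '' DCP6 := hV ▸ ⟨hTF, hT⟩
  rw [φ.add_eq_add_iff_of_injective hφ] at hST
  rw [DCP6_eq_weightTwo] at ha hb hc hd
  exact (weightTwo.eq_or_eq_of_add_eq_add ha hb hc hd hST hai hbi).imp (congrArg φ) (congrArg φ)

theorem DCP6.exists_octahedron : ∃ a a' b b' c c' : Fin 4 → ℝ,
    a ∈ DCP6 ∧ a' ∈ DCP6 ∧ b ∈ DCP6 ∧ b' ∈ DCP6 ∧ c ∈ DCP6 ∧ c' ∈ DCP6 ∧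
    a + a' = b + b' ∧ a + a' = c + c' ∧ a ≠ b ∧ a ≠ c ∧ b ≠ c ∧ a 0 = 1 ∧ b 0 = 1 ∧ c 0 = 1 := by
  refine ⟨![1, 1, 0, 0], ![0, 0, 1, 1], ![1, 0, 1, 0], ![0, 1, 0, 1], ![1, 0, 0, 1], ![0, 1, 1, 0],
    ?_⟩
  simp [DCP6, funext_iff, Fin.forall_fin_succ, Matrix.cons_val, one_add_one_eq_two]

/-- The octahedron `conv(DCP6)` is neither affinely equivalent to any stable set
polytope `conv(SSP(G))` nor to any exposed face of one. -/
theorem stmt7 (k : ℕ) (G : SimpleGraph (Fin k)) :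
    ¬ ∃ φ : (Fin 4 → ℝ) →ᵃ[ℝ] (Fin k → ℝ),
        Function.Injective φ ∧
        (φ '' (convexHull ℝ DCP6) = convexHull ℝ (SSP G) ∨
          ∃ F : Set (Fin k → ℝ),
            IsExposed ℝ (convexHull ℝ (SSP G)) F ∧ φ '' (convexHull ℝ DCP6) = F) := by
  rintro ⟨φ, hφ, hface⟩
  have hF : IsExtreme ℝ (convexHull ℝ (SSP G)) (φ '' convexHull ℝ DCP6) := by
    rcases hface with h | ⟨F, hF, h⟩
    · rw [h]
    · exact h ▸ hF.isExtreme
  have hSSP : ∀ p ∈ DCP6, φ p ∈ SSP G := fun p hp =>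
    ((image_eq_inter_of_isExtreme (fun x hx => hx.1) (fun y hy => hy.1) hφ hF).subset
      (mem_image_of_mem φ hp)).2
  have hsum := fun {a b c d} (h : a + b = c + d) => (φ.add_eq_add_iff_of_injective hφ).mpr h
  obtain ⟨a, a', b, b', c, c', ha, ha', hb, hb', hc, hc', hab, hac, hab_ne, hac_ne, hbc_ne,
    ha0, hb0, hc0⟩ := DCP6.exists_octahedron
  exact false_of_splitsUniquely_octahedron (hSSP a ha) (hSSP a' ha') (hSSP b hb) (hSSP b' hb')
    (hSSP c hc) (hSSP c' hc') (hsum hab) (hsum hac) (hφ.ne hab_ne) (hφ.ne hac_ne) (hφ.ne hbc_ne)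
    (splitsUniquely_of_isExtreme hφ hF ha hb ha0 hb0)
    (splitsUniquely_of_isExtreme hφ hF ha hc ha0 hc0)
    (splitsUniquely_of_isExtreme hφ hF hb hc hb0 hc0)
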